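/- arXiv:0911.3374 — 2 statements merged into one kernel-verified Lean document; each statement's English description precedes it below -/
import Mathlib

section
/- Let f : ℤ → ℝ be a function and let a ∈ ℤ. Let μ > 0 be non-integer with m − 1 < μ < m, where m = ⌈μ⌉. Assume additionally that ∇^k f(a) = 0 for k = 0, 1, ..., m−1. Then for all t ∈ ℤ with t ≥ a + m: f(t) = (1/Γ(μ)) · Σ_{τ=a+1}^{t} (t−τ+1)^{↑(μ−1)} · ∇_{(a+1)*}^{μ} f(τ). -/
open Finset

/-- Backward (nabla) difference: `∇f(t) = f(t) - f(t-1)`. -/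
def nabla (f : ℤ → ℝ) : ℤ → ℝ := fun t => f t - f (t - 1)

/-- Rising factorial `t^{↑α} = Γ(t+α)/Γ(t)`. -/
noncomputable def risingFac (t α : ℝ) : ℝ := Real.Gamma (t + α) / Real.Gamma t

/-- The `ν`-th order nabla fractional sum `∇_a^{-ν} f (t) = Σ_{s=a}^{t} (t-s+1)^{↑(ν-1)}/Γ(ν) · f(s)`. -/
noncomputable def fracSum (ν : ℝ) (a : ℤ) (f : ℤ → ℝ) : ℤ → ℝ := fun t =>
  ∑ s ∈ Finset.Icc a t, risingFac ((t - s + 1 : ℤ) : ℝ) (ν - 1) / Real.Gamma ν * f s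

/-- Caputo-like nabla fractional difference `∇_{a*}^{μ} f = ∇_a^{-(m-μ)} (∇^m f)`, `m = ⌈μ⌉`. -/
noncomputable def caputoNabla (μ : ℝ) (a : ℤ) (f : ℤ → ℝ) : ℤ → ℝ :=
  fracSum ((⌈μ⌉₊ : ℝ) - μ) a (nabla^[⌈μ⌉₊] f)

/-! The kernel `(n+1)^{↑(ν-1)}/Γ(ν)` of `∇^{-ν}` is the multiset coefficient `multichoose ν n`,
so the Chu–Vandermonde identity turns into the semigroup law `∇_a^{-ν} ∇_a^{-μ} = ∇_a^{-(ν+μ)}`.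
The right-hand side is therefore `∇_{a+1}^{-m} ∇^m f (t)`. A first-order sum of a difference
telescopes, so the `m`-fold sum undoes `∇^m` up to the boundary values `∇^k f(a)`, which vanish. -/

theorem Ring.multichoose_add {R : Type*} [CommRing R] [BinomialRing R] (r s : R) (n : ℕ) :
    Ring.multichoose (r + s) n =
      ∑ ij ∈ antidiagonal n, Ring.multichoose r ij.1 * Ring.multichoose s ij.2 := by
  have choose_neg (x : R) (k : ℕ) : Ring.choose (-x) k = (-1) ^ k * Ring.multichoose x k := by
    rw [Ring.choose_neg', Units.smul_def, zsmul_eq_mul, Int.cast_negOnePow_natCast]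
  have sign_sq (k : ℕ) : ((-1 : R) ^ k) * (-1) ^ k = 1 := by
    rw [← mul_pow, neg_one_mul, neg_neg, one_pow]
  calc Ring.multichoose (r + s) n
      = (-1) ^ n * Ring.choose (-r + -s) n := by
        rw [← neg_add, choose_neg, ← mul_assoc, sign_sq, one_mul]
    _ = _ := by
      rw [Ring.add_choose_eq n (Commute.all _ _), mul_sum]
      refine sum_congr rfl fun ij hij => ?_
      rw [choose_neg, choose_neg, ← HasAntidiagonal.mem_antidiagonal.mp hij]
      linear_combination (Ring.multichoose r ij.1 * Ring.multichoose s ij.2) *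
        ((-1) ^ ij.2 * (-1) ^ ij.2 * sign_sq ij.1 + sign_sq ij.2)

theorem Real.Gamma_add_nat_div_Gamma_eq {n : ℕ} (x : ℝ) (hx : ∀ k : ℕ, x ≠ -k) :
    Real.Gamma (x + n) / Real.Gamma x = (ascPochhammer ℝ n).eval x := by
  apply Complex.ofReal_injective
  have hx' : ∀ k : ℕ, (x : ℂ) ≠ -k := fun k h => hx k (by exact_mod_cast h)
  push_cast [← Complex.Gamma_ofReal]
  rw [Complex.Gamma_add_nat_div_Gamma_eq _ hx', ← ascPochhammer_map (algebraMap ℝ ℂ),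
    Polynomial.eval_map_algebraMap]
  exact Polynomial.aeval_algebraMap_apply_eq_algebraMap_eval x _

lemma risingFac_intCast_add_one_div_Gamma {ν : ℝ} (hν : 0 < ν) {n : ℤ} (hn : 0 ≤ n) :
    risingFac ((n + 1 : ℤ) : ℝ) (ν - 1) / Real.Gamma ν = Ring.multichoose ν n.toNat := by
  obtain ⟨k, rfl⟩ := Int.eq_ofNat_of_zero_le hn
  rw [Int.toNat_natCast, eq_comm, ← smul_right_inj (Nat.factorial_ne_zero k),
    Ring.factorial_nsmul_multichoose_eq_ascPochhammer, Polynomial.ascPochhammer_smeval_eq_eval,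
    ← Real.Gamma_add_nat_div_Gamma_eq ν fun j => by linarith [j.cast_nonneg (α := ℝ)],
    risingFac, nsmul_eq_mul]
  push_cast
  rw [show (k : ℝ) + 1 + (ν - 1) = ν + k by ring, Real.Gamma_nat_eq_factorial]
  field_simp

lemma Finset.sum_Icc_int_eq_sum_antidiagonal {M : Type*} [AddCommMonoid M] (f : ℕ → ℕ → M)
    {a b : ℤ} (hab : a ≤ b) :
    ∑ s ∈ Icc a b, f (b - s).toNat (s - a).toNat =
      ∑ ij ∈ antidiagonal (b - a).toNat, f ij.1 ij.2 :=
  sum_nbij' (fun s => ((b - s).toNat, (s - a).toNat)) (fun ij => a + ij.2)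
    (by intro s hs; simp only [mem_Icc, HasAntidiagonal.mem_antidiagonal] at hs ⊢; omega)
    (by intro ij hij; simp only [mem_Icc, HasAntidiagonal.mem_antidiagonal] at hij ⊢; omega)
    (by intro s hs; simp only [mem_Icc] at hs; simp; omega)
    (by
      intro ij hij
      simp only [HasAntidiagonal.mem_antidiagonal] at hij
      exact Prod.ext (by dsimp only; omega) (by dsimp only; omega))
    (fun _ _ => rfl)

lemma sum_Icc_risingFac_mul_risingFac {ν μ : ℝ} (hν : 0 < ν) (hμ : 0 < μ) {τ t : ℤ}
    (hτt : τ ≤ t) :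
    ∑ s ∈ Icc τ t, risingFac ((t - s + 1 : ℤ) : ℝ) (ν - 1) / Real.Gamma ν *
        (risingFac ((s - τ + 1 : ℤ) : ℝ) (μ - 1) / Real.Gamma μ) =
      risingFac ((t - τ + 1 : ℤ) : ℝ) (ν + μ - 1) / Real.Gamma (ν + μ) := by
  rw [risingFac_intCast_add_one_div_Gamma (add_pos hν hμ) (by omega), Ring.multichoose_add,
    ← sum_Icc_int_eq_sum_antidiagonal
      (fun i j => Ring.multichoose ν i * Ring.multichoose μ j) hτt]
  refine sum_congr rfl fun s hs => ?_
  obtain ⟨hτs, hst⟩ := mem_Icc.mp hs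
  rw [risingFac_intCast_add_one_div_Gamma hν (by omega),
    risingFac_intCast_add_one_div_Gamma hμ (by omega)]

theorem fracSum_fracSum {ν μ : ℝ} (hν : 0 < ν) (hμ : 0 < μ) (a : ℤ) (g : ℤ → ℝ) (t : ℤ) :
    fracSum ν a (fracSum μ a g) t = fracSum (ν + μ) a g t := by
  simp only [fracSum, mul_sum]
  rw [sum_comm' (t' := Icc a t) (s' := fun τ => Icc τ t)
    (by intro s τ; simp only [mem_Icc]; omega)]
  refine sum_congr rfl fun τ hτ => ?_
  rw [← sum_Icc_risingFac_mul_risingFac hν hμ (mem_Icc.mp hτ).2, sum_mul]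
  exact sum_congr rfl fun s _ => by ring

lemma risingFac_intCast_zero {n : ℤ} (hn : 0 < n) : risingFac (n : ℝ) 0 = 1 := by
  rw [risingFac, add_zero, div_self (Real.Gamma_pos_of_pos (by exact_mod_cast hn)).ne']

lemma Finset.sum_Icc_int_sub_telescope {M : Type*} [AddCommGroup M] (g : ℤ → M) {a t : ℤ}
    (h : a - 1 ≤ t) : ∑ s ∈ Icc a t, (g s - g (s - 1)) = g t - g (a - 1) := by
  induction t, h using Int.leInduction with
  | base => rw [Icc_eq_empty (by omega), sum_empty, sub_self]
  | succ t ht ih =>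
    rw [← insert_Icc_right_eq_Icc_add_one (by omega),
      sum_insert (by simp only [mem_Icc]; omega), ih, add_sub_cancel_right]
    abel

theorem fracSum_one_nabla (a : ℤ) (g : ℤ → ℝ) {t : ℤ} (h : a - 1 ≤ t) :
    fracSum 1 a (nabla g) t = g t - g (a - 1) := by
  rw [← sum_Icc_int_sub_telescope g h]
  refine sum_congr rfl fun s hs => ?_
  rw [sub_self, risingFac_intCast_zero (by linarith [(mem_Icc.mp hs).2]), Real.Gamma_one,
    div_one, one_mul, nabla]

theorem fracSum_natCast_iterate_nabla (f : ℤ → ℝ) (a : ℤ) {M : ℕ} (hM : 0 < M)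
    (hf : ∀ k < M, nabla^[k] f a = 0) {t : ℤ} (ht : a ≤ t) :
    fracSum M (a + 1) (nabla^[M] f) t = f t := by
  induction M, hM using Nat.le_induction generalizing t with
  | base =>
    rw [Nat.cast_one, Function.iterate_one, fracSum_one_nabla _ _ (by omega),
      add_sub_cancel_right, show f a = 0 from hf 0 one_pos, sub_zero]
  | succ M hM ih =>
    have hlow : ∀ τ ∈ Icc (a + 1) t,
        fracSum 1 (a + 1) (nabla^[M + 1] f) τ = nabla^[M] f τ := by
      intro τ hτ
      rw [Function.iterate_succ_apply',
        fracSum_one_nabla _ _ (by linarith [(mem_Icc.mp hτ).1]), add_sub_cancel_right,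
        hf M M.lt_succ_self, sub_zero]
    rw [Nat.cast_succ, ← fracSum_fracSum (by exact_mod_cast hM) one_pos]
    calc fracSum M (a + 1) (fracSum 1 (a + 1) (nabla^[M + 1] f)) t
        = fracSum M (a + 1) (nabla^[M] f) t := sum_congr rfl fun τ hτ => by rw [hlow τ hτ]
      _ = f t := ih (fun k hk => hf k (by omega)) ht

theorem discrete_nabla_fractional_taylor_of_deriv_zero_general
    (f : ℤ → ℝ) (a : ℤ) (μ : ℝ) (hμ : 0 < μ)
    (m : ℕ) (hm : m = ⌈μ⌉₊) (hm2 : μ < m)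
    (hf0 : ∀ k < m, nabla^[k] f a = 0)
    (t : ℤ) (ht : a + m ≤ t) :
    f t = (1 / Real.Gamma μ) * ∑ τ ∈ Finset.Icc (a + 1) t,
        risingFac ((t - τ + 1 : ℤ) : ℝ) (μ - 1) * caputoNabla μ (a + 1) f τ := by
  have hm0 : 0 < m := by exact_mod_cast hμ.trans hm2
  have hrhs : (1 / Real.Gamma μ) * ∑ τ ∈ Finset.Icc (a + 1) t,
      risingFac ((t - τ + 1 : ℤ) : ℝ) (μ - 1) * caputoNabla μ (a + 1) f τ
      = fracSum μ (a + 1) (caputoNabla μ (a + 1) f) t := by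
    rw [fracSum, mul_sum]
    exact sum_congr rfl fun τ _ => by ring
  rw [hrhs, caputoNabla, ← hm, fracSum_fracSum hμ (sub_pos.2 hm2), add_sub_cancel,
    fracSum_natCast_iterate_nabla f a hm0 hf0 (by omega)]

/-- Discrete backward fractional Taylor formula with vanishing lower differences. -/
theorem discrete_nabla_fractional_taylor_of_deriv_zero
    (f : ℤ → ℝ) (a : ℤ) (μ : ℝ) (hμ : 0 < μ) (hμint : ∀ n : ℤ, μ ≠ n)
    (m : ℕ) (hm : m = ⌈μ⌉₊) (hm1 : (m : ℝ) - 1 < μ) (hm2 : μ < m)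
    (hf0 : ∀ k < m, nabla^[k] f a = 0)
    (t : ℤ) (ht : a + m ≤ t) :
    f t = (1 / Real.Gamma μ) * ∑ τ ∈ Finset.Icc (a + 1) t,
        risingFac ((t - τ + 1 : ℤ) : ℝ) (μ - 1) * caputoNabla μ (a + 1) f τ :=
  discrete_nabla_fractional_taylor_of_deriv_zero_general f a μ hμ m hm hm2 hf0 t ht
end

section
/- (Discrete nabla fractional Ostrowski inequality.) Let μ > 0 be non-integer with m − 1 < μ < m, m = ⌈μ⌉, let p, a ∈ ℤ₊ with μ > p, and let b ∈ ℕ with a + m < b. Let f be a real valued function defined on the discrete interval [a−m+1, a−m+2, ..., b]. Assume ∇^k f(a) = 0 for k = p+1, ..., m−1. Then | (1/(b−a−m)) · Σ_{j=a+m+1}^{b} ∇^p f(j) − ∇^p f(a) | ≤ ( ( (b−a)^{↑(μ−p+1)} − m^{↑(μ−p+1)} ) / ( Γ(μ−p+2) · (b−a−m) ) ) · max_{τ ∈ {a+1,...,b}} |∇_{(a+1)*}^{μ} f(τ)|. -/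
open Finset

/-!
The nabla kernel is a multiset coefficient: `(k + 1)^{↑(ν - 1)} / Γ(ν) = multichoose ν k`, the
coefficient of `xᵏ` in `(1 - x)^{-ν}`. Fractional sums are therefore convolutions with these
coefficients, and the Chu–Vandermonde identity gives the semigroup law
`∇^{-ν} ∇^{-κ} = ∇^{-(ν + κ)}`. Hence `∇_{a+1}^{-(μ-p)}` applied to the Caputo difference of `f`
is `∇^{-(m-p)} ∇^{m-p} (∇^p f)`, which by telescoping and the vanishing differences at `a`
equals `∇^p f(j) - ∇^p f(a)`. Bounding the Caputo difference by its maximum `M` leaves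
`M · ∇^{-(μ-p)} 1 (j) = M · (j - a)^{↑(μ-p)} / Γ(μ - p + 1)`, and summing over `j` (the semigroup
law once more, with `∇^{-1}`) produces the constant of the inequality.
-/

namespace Ring

variable {R : Type*} [CommRing R] [BinomialRing R]

/-- Chu–Vandermonde for `multichoose`: `Ring.add_choose_eq` at `-r, -s`, since
`choose (-r) n = (-1)ⁿ • multichoose r n`. -/
theorem multichoose_add_s11 (r s : R) (n : ℕ) :
    multichoose (r + s) n =
      ∑ ij ∈ antidiagonal n, multichoose r ij.1 * multichoose s ij.2 := by
  have h := add_choose_eq (r := -r) (s := -s) n (Commute.all _ _)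
  rw [← neg_add, choose_neg'] at h
  have hsum : ∀ ij ∈ antidiagonal n, choose (-r) ij.1 * choose (-s) ij.2 =
      (n : ℤ).negOnePow • (multichoose r ij.1 * multichoose s ij.2) := by
    intro ij hij
    rw [← mem_antidiagonal.1 hij, choose_neg', choose_neg', smul_mul_smul_comm,
      Nat.cast_add, Int.negOnePow_add]
  rw [sum_congr rfl hsum, ← smul_sum] at h
  exact (smul_left_cancel_iff _).1 h

theorem sum_range_succ_multichoose (r : R) (n : ℕ) :
    ∑ k ∈ range (n + 1), multichoose r k = multichoose (r + 1) n := by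
  induction n with
  | zero => simp
  | succ n ih => rw [sum_range_succ, ih, multichoose_succ_succ, add_comm]

theorem multichoose_pos [LinearOrder R] [IsStrictOrderedRing R] {r : R} (hr : 0 < r) (n : ℕ) : 0 < multichoose r n := by
  have h := ascPochhammer_pos n r hr
  rw [← Polynomial.ascPochhammer_smeval_eq_eval, ← factorial_nsmul_multichoose_eq_ascPochhammer,
    nsmul_eq_mul] at h
  exact pos_of_mul_pos_right h (by positivity)

end Ring

theorem Real.Gamma_add_natCast {ν : ℝ} (hν : 0 < ν) (n : ℕ) :
    Real.Gamma (ν + n) = n.factorial * Ring.multichoose ν n * Real.Gamma ν := by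
  rw [← nsmul_eq_mul, Ring.factorial_nsmul_multichoose_eq_ascPochhammer,
    Polynomial.ascPochhammer_smeval_eq_eval]
  induction n with
  | zero => simp
  | succ n ih =>
    rw [Nat.cast_succ, ← add_assoc, Real.Gamma_add_one (by positivity), ih,
      ascPochhammer_succ_eval]
    ring

theorem risingFac_natCast_add_one {ν : ℝ} (hν : 0 < ν) (n : ℕ) :
    risingFac (n + 1) (ν - 1) = Real.Gamma ν * Ring.multichoose ν n := by
  rw [risingFac, show (n : ℝ) + 1 + (ν - 1) = ν + n by ring, Real.Gamma_add_natCast hν,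
    Real.Gamma_nat_eq_factorial]
  field_simp

theorem Finset.sum_Icc_eq_sum_range_sub {M : Type*} [AddCommMonoid M] {c t : ℤ} (hct : c ≤ t)
    (F : ℤ → M) : ∑ s ∈ Icc c t, F s = ∑ k ∈ range ((t - c).toNat + 1), F (t - k) := by
  refine sum_nbij' (fun s => (t - s).toNat) (fun k => t - k) ?_ ?_ ?_ ?_ ?_ <;>
    intro x hx <;> simp only [mem_Icc, mem_range] at hx ⊢ <;> first | omega | congr 1; omega

theorem sum_Icc_nabla (g : ℤ → ℝ) {a j : ℤ} (hj : a ≤ j) :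
    ∑ τ ∈ Icc (a + 1) j, nabla g τ = g j - g a := by
  induction j, hj using Int.leInduction with
  | base => simp
  | succ j hj ih =>
    rw [← insert_Icc_right_eq_Icc_add_one (by omega), sum_insert (by simp), ih, nabla,
      add_sub_cancel_right]
    ring

theorem fracSum_eq_sum_multichoose {ν : ℝ} (hν : 0 < ν) (c : ℤ) (F : ℤ → ℝ) (t : ℤ) :
    fracSum ν c F t = ∑ s ∈ Icc c t, Ring.multichoose ν (t - s).toNat * F s := by
  refine sum_congr rfl fun s hs => ?_
  have hst : ((t - s + 1 : ℤ) : ℝ) = ((t - s).toNat : ℕ) + 1 := by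
    rw [mem_Icc] at hs
    rw [← Int.cast_natCast, Int.toNat_of_nonneg (sub_nonneg.2 hs.2)]
    push_cast; ring
  rw [hst, risingFac_natCast_add_one hν, mul_div_cancel_left₀ _ (Real.Gamma_pos_of_pos hν).ne']

theorem fracSum_one (c : ℤ) (F : ℤ → ℝ) (t : ℤ) : fracSum 1 c F t = ∑ s ∈ Icc c t, F s := by
  simp [fracSum_eq_sum_multichoose one_pos]

theorem sum_Icc_multichoose_mul_multichoose (ν κ : ℝ) {σ t : ℤ} (hσt : σ ≤ t) :
    ∑ s ∈ Icc σ t, Ring.multichoose ν (t - s).toNat * Ring.multichoose κ (s - σ).toNat =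
      Ring.multichoose (ν + κ) (t - σ).toNat := by
  rw [Ring.multichoose_add_s11, Nat.sum_antidiagonal_eq_sum_range_succ_mk,
    sum_Icc_eq_sum_range_sub hσt]
  refine sum_congr rfl fun k hk => ?_
  rw [mem_range] at hk
  congr 2 <;> omega

theorem fracSum_fracSum_s11 {ν κ : ℝ} (hν : 0 < ν) (hκ : 0 < κ) (c : ℤ) (F : ℤ → ℝ) (t : ℤ) :
    fracSum ν c (fracSum κ c F) t = fracSum (ν + κ) c F t := by
  simp only [fracSum_eq_sum_multichoose hν, fracSum_eq_sum_multichoose hκ,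
    fracSum_eq_sum_multichoose (add_pos hν hκ), mul_sum]
  rw [sum_comm' (t' := Icc c t) (s' := fun σ => Icc σ t) (by intros; simp only [mem_Icc]; omega)]
  refine sum_congr rfl fun σ hσ => ?_
  rw [mem_Icc] at hσ
  rw [← sum_Icc_multichoose_mul_multichoose ν κ hσ.2, sum_mul]
  exact sum_congr rfl fun s _ => by ring

theorem fracSum_const_one {ν : ℝ} (hν : 0 < ν) {c t : ℤ} (hct : c ≤ t) :
    fracSum ν c (fun _ => 1) t =
      risingFac ((t - c + 1 : ℤ) : ℝ) ν / Real.Gamma (ν + 1) := by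
  have htc : ((t - c + 1 : ℤ) : ℝ) = ((t - c).toNat : ℕ) + 1 := by
    rw [← Int.cast_natCast, Int.toNat_of_nonneg (sub_nonneg.2 hct)]
    push_cast; ring
  have hrising := risingFac_natCast_add_one (ν := ν + 1) (by positivity) (t - c).toNat
  rw [add_sub_cancel_right] at hrising
  rw [fracSum_eq_sum_multichoose hν, sum_Icc_eq_sum_range_sub hct, htc, hrising,
    mul_div_cancel_left₀ _ (Real.Gamma_pos_of_pos (by positivity)).ne',
    ← Ring.sum_range_succ_multichoose]
  refine sum_congr rfl fun k hk => ?_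
  rw [mem_range] at hk
  rw [mul_one]
  congr 1; omega

theorem fracSum_iterate_nabla (q : ℕ) {h : ℤ → ℝ} {a : ℤ}
    (h0 : ∀ k, 1 ≤ k → k ≤ q → nabla^[k] h a = 0) {j : ℤ} (hj : a ≤ j) :
    fracSum (q + 1) (a + 1) (nabla^[q + 1] h) j = h j - h a := by
  induction q generalizing h j with
  | zero => simpa [fracSum_one] using sum_Icc_nabla h hj
  | succ q ih =>
    have hnabla : nabla h a = 0 := h0 1 le_rfl (by omega)
    have h0' : ∀ k, 1 ≤ k → k ≤ q → nabla^[k] (nabla h) a = 0 := fun k hk1 hkq => by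
      rw [← Function.iterate_succ_apply]
      exact h0 (k + 1) (by omega) (by omega)
    have hstep : ∀ τ ∈ Icc (a + 1) j,
        fracSum (q + 1) (a + 1) (nabla^[q + 1] (nabla h)) τ = nabla h τ := fun τ hτ => by
      rw [ih h0' (Int.lt_iff_add_one_le.2 (mem_Icc.1 hτ).1).le, hnabla, sub_zero]
    rw [Nat.cast_succ, add_comm _ (1 : ℝ), ← fracSum_fracSum_s11 one_pos (by positivity),
      fracSum_one, Function.iterate_succ_apply, sum_congr rfl hstep, sum_Icc_nabla h hj]

theorem fracSum_caputoNabla {μ : ℝ} (hμ : μ < ⌈μ⌉₊) {p : ℕ} (hp : (p : ℝ) < μ) {f : ℤ → ℝ}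
    {a : ℤ} (hf0 : ∀ k, p + 1 ≤ k → k ≤ ⌈μ⌉₊ - 1 → nabla^[k] f a = 0) {j : ℤ} (hj : a ≤ j) :
    fracSum (μ - p) (a + 1) (caputoNabla μ (a + 1) f) j = nabla^[p] f j - nabla^[p] f a := by
  obtain ⟨q, hq⟩ : ∃ q, ⌈μ⌉₊ = q + 1 + p :=
    ⟨⌈μ⌉₊ - p - 1, by have : p < ⌈μ⌉₊ := (by exact_mod_cast hp.trans hμ); omega⟩
  have hq' : μ - p + (⌈μ⌉₊ - μ) = (q : ℝ) + 1 := by rw [hq]; push_cast; ring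
  rw [caputoNabla, fracSum_fracSum_s11 (by linarith) (by linarith), hq', hq,
    Function.iterate_add_apply]
  refine fracSum_iterate_nabla q (fun k hk1 hkq => ?_) hj
  rw [← Function.iterate_add_apply]
  exact hf0 (k + p) (by omega) (by omega)

theorem abs_fracSum_le {ν : ℝ} (hν : 0 < ν) {c t : ℤ} {g : ℤ → ℝ} {M : ℝ}
    (hM : ∀ s ∈ Icc c t, |g s| ≤ M) :
    |fracSum ν c g t| ≤ M * fracSum ν c (fun _ => 1) t := by
  rw [fracSum_eq_sum_multichoose hν, fracSum_eq_sum_multichoose hν, mul_sum]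
  refine (abs_sum_le_sum_abs _ _).trans (sum_le_sum fun s hs => ?_)
  have hpos := Ring.multichoose_pos hν (t - s).toNat
  rw [abs_mul, abs_of_pos hpos, mul_one, mul_comm M]
  exact mul_le_mul_of_nonneg_left (hM s hs) hpos.le

theorem sum_Icc_fracSum_const_one {ν : ℝ} (hν : 0 < ν) {c d t : ℤ} (hcd : c ≤ d) (hdt : d ≤ t) :
    ∑ j ∈ Icc (d + 1) t, fracSum ν c (fun _ => 1) j =
      (risingFac ((t - c + 1 : ℤ) : ℝ) (ν + 1) - risingFac ((d - c + 1 : ℤ) : ℝ) (ν + 1)) /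
        Real.Gamma (ν + 2) := by
  have hsplit : Icc c t = Icc c d ∪ Icc (d + 1) t := by
    ext x; simp only [mem_union, mem_Icc]; omega
  have hdisj : Disjoint (Icc c d) (Icc (d + 1) t) :=
    disjoint_left.2 fun x hx hx' => by rw [mem_Icc] at hx hx'; omega
  have hsum (e : ℤ) (hce : c ≤ e) : ∑ j ∈ Icc c e, fracSum ν c (fun _ => 1) j =
      risingFac ((e - c + 1 : ℤ) : ℝ) (ν + 1) / Real.Gamma (ν + 2) := by
    rw [← fracSum_one, fracSum_fracSum_s11 one_pos hν, add_comm,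
      fracSum_const_one (by positivity) hce, add_assoc, one_add_one_eq_two]
  rw [sub_div, ← hsum t (hcd.trans hdt), ← hsum d hcd, hsplit, sum_union hdisj,
    add_sub_cancel_left]

theorem abs_sum_Icc_iterate_nabla_sub_le {μ : ℝ} (hμ : μ < ⌈μ⌉₊) {p : ℕ} (hp : (p : ℝ) < μ)
    {f : ℤ → ℝ} {a b : ℤ} (hf0 : ∀ k, p + 1 ≤ k → k ≤ ⌈μ⌉₊ - 1 → nabla^[k] f a = 0)
    (hb : a + ⌈μ⌉₊ < b) {M : ℝ} (hM : ∀ s ∈ Icc (a + 1) b, |caputoNabla μ (a + 1) f s| ≤ M) :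
    |∑ j ∈ Icc (a + ⌈μ⌉₊ + 1) b, (nabla^[p] f j - nabla^[p] f a)| ≤
      M * ((risingFac ((b : ℝ) - a) (μ - p + 1) - risingFac (⌈μ⌉₊ : ℝ) (μ - p + 1)) /
        Real.Gamma (μ - p + 2)) := by
  have hν : 0 < μ - p := sub_pos.2 hp
  have hm0 : 0 < ⌈μ⌉₊ := by exact_mod_cast (Nat.cast_nonneg p).trans_lt (hp.trans hμ)
  calc _ ≤ ∑ j ∈ Icc (a + ⌈μ⌉₊ + 1) b, M * fracSum (μ - p) (a + 1) (fun _ => 1) j := by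
        refine (abs_sum_le_sum_abs _ _).trans (sum_le_sum fun j hj => ?_)
        rw [mem_Icc] at hj
        rw [← fracSum_caputoNabla hμ hp hf0 (by omega)]
        exact abs_fracSum_le hν fun s hs => hM s (by rw [mem_Icc] at hs ⊢; omega)
    _ = _ := by
        rw [← mul_sum, sum_Icc_fracSum_const_one hν (by omega) hb.le]
        push_cast
        ring_nf

theorem discrete_nabla_fractional_ostrowski_general
    (μ : ℝ)
    (m : ℕ) (hm : m = ⌈μ⌉₊) (hm2 : μ < m)
    (p a : ℕ) (hp : (p : ℝ) < μ)
    (b : ℤ) (hb : (a : ℤ) + m < b)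
    (f : ℤ → ℝ)
    (hf0 : ∀ k, p + 1 ≤ k → k ≤ m - 1 → nabla^[k] f a = 0) :
    |(1 / ((b : ℝ) - a - m)) * ∑ j ∈ Finset.Icc ((a : ℤ) + m + 1) b, nabla^[p] f j -
        nabla^[p] f a| ≤
      (risingFac ((b : ℝ) - a) (μ - p + 1) - risingFac (m : ℝ) (μ - p + 1)) /
          (Real.Gamma (μ - p + 2) * ((b : ℝ) - a - m)) *
        sSup ((fun τ : ℤ => |caputoNabla μ ((a : ℤ) + 1) f τ|) ''
          Set.Icc ((a : ℤ) + 1) b) := by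
  subst hm
  have hM : ∀ s ∈ Icc ((a : ℤ) + 1) b, |caputoNabla μ ((a : ℤ) + 1) f s| ≤
      sSup ((fun τ : ℤ => |caputoNabla μ ((a : ℤ) + 1) f τ|) '' Set.Icc ((a : ℤ) + 1) b) :=
    fun s hs => le_csSup (Set.toFinite _).bddAbove ⟨s, by simpa using hs, rfl⟩
  have hsum := abs_sum_Icc_iterate_nabla_sub_le hm2 hp hf0 hb hM
  push_cast at hsum
  have hcard : ((Icc ((a : ℤ) + ⌈μ⌉₊ + 1) b).card : ℝ) = (b : ℝ) - a - ⌈μ⌉₊ := by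
    rw [Int.card_Icc, ← Int.cast_natCast, Int.toNat_of_nonneg (by omega)]; push_cast; ring
  have hB : 0 < (b : ℝ) - a - ⌈μ⌉₊ := by
    rw [← hcard]; exact_mod_cast (nonempty_Icc.2 (by omega)).card_pos
  have haverage : 1 / ((b : ℝ) - a - ⌈μ⌉₊) * ∑ j ∈ Icc ((a : ℤ) + ⌈μ⌉₊ + 1) b, nabla^[p] f j -
      nabla^[p] f a = (∑ j ∈ Icc ((a : ℤ) + ⌈μ⌉₊ + 1) b, (nabla^[p] f j - nabla^[p] f a)) /
        ((b : ℝ) - a - ⌈μ⌉₊) := by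
    rw [sum_sub_distrib, sum_const, nsmul_eq_mul, hcard]
    field_simp
  rw [haverage, abs_div, abs_of_pos hB, div_le_iff₀ hB]
  exact hsum.trans_eq (by field_simp)

/-- Discrete nabla fractional Ostrowski inequality. -/
theorem discrete_nabla_fractional_ostrowski
    (μ : ℝ) (hμ : 0 < μ) (hμint : ∀ n : ℤ, μ ≠ n)
    (m : ℕ) (hm : m = ⌈μ⌉₊) (hm1 : (m : ℝ) - 1 < μ) (hm2 : μ < m)
    (p a : ℕ) (hp : (p : ℝ) < μ)
    (b : ℤ) (hb : (a : ℤ) + m < b)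
    (f : ℤ → ℝ)
    (hf0 : ∀ k, p + 1 ≤ k → k ≤ m - 1 → nabla^[k] f a = 0) :
    |(1 / ((b : ℝ) - a - m)) * ∑ j ∈ Finset.Icc ((a : ℤ) + m + 1) b, nabla^[p] f j -
        nabla^[p] f a| ≤
      (risingFac ((b : ℝ) - a) (μ - p + 1) - risingFac (m : ℝ) (μ - p + 1)) /
          (Real.Gamma (μ - p + 2) * ((b : ℝ) - a - m)) *
        sSup ((fun τ : ℤ => |caputoNabla μ ((a : ℤ) + 1) f τ|) ''
          Set.Icc ((a : ℤ) + 1) b) :=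
  discrete_nabla_fractional_ostrowski_general μ m hm hm2 p a hp b hb f hf0
end
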